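/- Let f : [0, ∞) → ℝ^{L_R*} be a solution of the discrete acoustic wave kinetic system. Then the total energy ∑_{p∈L_R*} |p|·f_p(t) is constant in t. -/

import Mathlib

/-!
Both sums in `Qres` are sums of one rate `c p q r` of the process `p + q → r`, symmetric in
`p, q` and supported on the resonance `|r| = |p| + |q|`: the gain sum at `p₁` is `∑ c p₂ p₃ p₁`,
the loss sum is `∑ c p₁ p₂ p₃`. Tested against `|·|`, the gain term's weight `|r|` splits as
`|p| + |q|`, the two halves are equal by the symmetry, so the gain term is exactly twice the
loss term. Hence `d/dt ∑ |p| f_p = ∑ |p| Q_p[f] = 0`.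
-/
open scoped BigOperators Classical

/-- Euclidean norm of a point of the integer lattice `ℤ³`. -/
noncomputable def enorm3 (p : Fin 3 → ℤ) : ℝ := Real.sqrt (∑ i, ((p i : ℝ))^2)

/-- The truncated lattice `L_R* = {p ∈ ℤ³ : 0 < |p| < R}` (as a finite set). -/
noncomputable def latticeBall (R : ℝ) : Finset (Fin 3 → ℤ) :=
  (Finset.Icc (fun _ => (-⌈R⌉ : ℤ)) (fun _ => (⌈R⌉ : ℤ))).filter
    (fun p => 0 < enorm3 p ∧ enorm3 p < R)

/-- Right-hand side of the discrete exact-resonance acoustic wave kinetic system, with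
kernel `V_{p₁,p₂,p₃} = |p₁||p₂||p₃|` and phonon dispersion `ω(p) = |p|`. -/
noncomputable def Qres (R : ℝ) (f : (Fin 3 → ℤ) → ℝ) (p1 : Fin 3 → ℤ) : ℝ :=
  (∑ p2 ∈ latticeBall R, ∑ p3 ∈ latticeBall R,
      if p1 = p2 + p3 ∧ enorm3 p1 = enorm3 p2 + enorm3 p3 then
        enorm3 p1 * enorm3 p2 * enorm3 p3 *
          (f p2 * f p3 - f p1 * (f p2 + f p3)) else 0)
  - 2 * ∑ p2 ∈ latticeBall R, ∑ p3 ∈ latticeBall R,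
      if p3 = p1 + p2 ∧ enorm3 p3 = enorm3 p1 + enorm3 p2 then
        enorm3 p1 * enorm3 p2 * enorm3 p3 *
          (f p1 * f p2 - f p3 * (f p1 + f p2)) else 0

/-- Right-hand side of the discrete near-resonance acoustic wave kinetic system with
resonance broadening `Λ`. -/
noncomputable def QNR (R Λ : ℝ) (f : (Fin 3 → ℤ) → ℝ) (p1 : Fin 3 → ℤ) : ℝ :=
  (∑ p2 ∈ latticeBall R, ∑ p3 ∈ latticeBall R,
      if p1 = p2 + p3 ∧ |enorm3 p1 - enorm3 p2 - enorm3 p3| ≤ Λ then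
        enorm3 p1 * enorm3 p2 * enorm3 p3 *
          (f p2 * f p3 - f p1 * (f p2 + f p3)) else 0)
  - 2 * ∑ p2 ∈ latticeBall R, ∑ p3 ∈ latticeBall R,
      if p3 = p1 + p2 ∧ |enorm3 p3 - enorm3 p1 - enorm3 p2| ≤ Λ then
        enorm3 p1 * enorm3 p2 * enorm3 p3 *
          (f p1 * f p2 - f p3 * (f p1 + f p2)) else 0

theorem sum_mul_sum_sum_eq_two_mul_of_resonant {α : Type*} (B : Finset α) (ω : α → ℝ)
    (c : α → α → α → ℝ) (hsymm : ∀ p q r, c p q r = c q p r)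
    (hres : ∀ p q r, c p q r ≠ 0 → ω r = ω p + ω q) :
    ∑ r ∈ B, ω r * ∑ p ∈ B, ∑ q ∈ B, c p q r =
      2 * ∑ p ∈ B, ω p * ∑ q ∈ B, ∑ r ∈ B, c p q r := by
  have hsplit : ∀ p q r, ω r * c p q r = ω p * c p q r + ω q * c q p r := by
    intro p q r
    by_cases h : c p q r = 0
    · simp [h, ← hsymm p q r]
    · rw [hres p q r h, ← hsymm]; ring
  have hswap : ∑ p ∈ B, ∑ q ∈ B, ∑ r ∈ B, ω q * c q p r =
      ∑ p ∈ B, ∑ q ∈ B, ∑ r ∈ B, ω p * c p q r := Finset.sum_comm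
  calc ∑ r ∈ B, ω r * ∑ p ∈ B, ∑ q ∈ B, c p q r
      = ∑ p ∈ B, ∑ q ∈ B, ∑ r ∈ B, ω r * c p q r := by
        simp only [Finset.mul_sum]
        rw [Finset.sum_comm]
        exact Finset.sum_congr rfl fun _ _ => Finset.sum_comm
    _ = 2 * ∑ p ∈ B, ∑ q ∈ B, ∑ r ∈ B, ω p * c p q r := by
        simp only [hsplit, Finset.sum_add_distrib, hswap]; ring
    _ = 2 * ∑ p ∈ B, ω p * ∑ q ∈ B, ∑ r ∈ B, c p q r := by
        simp only [Finset.mul_sum]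

section ThreeWaveRate

variable {α : Type*} [DecidableEq α]

noncomputable def threeWaveRate [Add α] (ω f : α → ℝ) (p q r : α) : ℝ :=
  if r = p + q ∧ ω r = ω p + ω q then ω p * ω q * ω r * (f p * f q - f r * (f p + f q))
  else 0

theorem threeWaveRate_comm [AddCommMagma α] (ω f : α → ℝ) (p q r : α) :
    threeWaveRate ω f p q r = threeWaveRate ω f q p r := by
  simp only [threeWaveRate, add_comm p q, add_comm (ω p) (ω q), add_comm (f p) (f q)]
  congr 1; ring

theorem resonance_of_threeWaveRate_ne_zero [Add α] {ω f : α → ℝ} {p q r : α}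
    (h : threeWaveRate ω f p q r ≠ 0) : ω r = ω p + ω q := by
  by_contra hne
  exact h (if_neg fun hpq => hne hpq.2)

end ThreeWaveRate

theorem Qres_eq_threeWaveRate (R : ℝ) (f : (Fin 3 → ℤ) → ℝ) (p : Fin 3 → ℤ) :
    Qres R f p = ∑ q ∈ latticeBall R, ∑ r ∈ latticeBall R, threeWaveRate enorm3 f q r p
      - 2 * ∑ q ∈ latticeBall R, ∑ r ∈ latticeBall R, threeWaveRate enorm3 f p q r := by
  unfold Qres threeWaveRate
  congr 1
  refine Finset.sum_congr rfl fun q _ => Finset.sum_congr rfl fun r _ => ?_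
  split_ifs <;> ring

theorem sum_enorm3_mul_Qres (R : ℝ) (f : (Fin 3 → ℤ) → ℝ) :
    ∑ p ∈ latticeBall R, enorm3 p * Qres R f p = 0 := by
  simp only [Qres_eq_threeWaveRate, mul_sub, Finset.sum_sub_distrib, mul_left_comm _ (2 : ℝ),
    ← Finset.mul_sum]
  rw [sum_mul_sum_sum_eq_two_mul_of_resonant _ _ _ (threeWaveRate_comm enorm3 f)
    fun _ _ _ => resonance_of_threeWaveRate_ne_zero, sub_self]

theorem eq_of_hasDerivAt_zero_of_nonneg {g : ℝ → ℝ} (hg : ∀ s, 0 ≤ s → HasDerivAt g 0 s)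
    {t : ℝ} (ht : 0 ≤ t) : g t = g 0 :=
  constant_of_has_deriv_right_zero
    (fun x hx => (hg x hx.1).continuousAt.continuousWithinAt)
    (fun x hx => (hg x hx.1).hasDerivWithinAt) t (Set.right_mem_Icc.mpr ht)

theorem energy_conservation_lattice_general (R : ℝ)
    (f : ℝ → (Fin 3 → ℤ) → ℝ)
    (hsol : ∀ p ∈ latticeBall R, ∀ t : ℝ, 0 ≤ t →
      HasDerivAt (fun s => f s p) (Qres R (f t) p) t) :
    ∀ t : ℝ, 0 ≤ t →
      ∑ p ∈ latticeBall R, enorm3 p * f t p = ∑ p ∈ latticeBall R, enorm3 p * f 0 p := by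
  intro t ht
  refine eq_of_hasDerivAt_zero_of_nonneg (g := fun s => ∑ p ∈ latticeBall R, enorm3 p * f s p)
    (fun s hs => ?_) ht
  rw [← sum_enorm3_mul_Qres R (f s)]
  exact HasDerivAt.fun_sum fun p hp => (hsol p hp s hs).const_mul (enorm3 p)

/-- Conservation of energy for the discrete acoustic wave kinetic system:
`∑_{p ∈ L_R*} |p| f_p(t)` is constant along every solution. -/
theorem energy_conservation_lattice (R : ℝ) (hR : 0 < R)
    (f : ℝ → (Fin 3 → ℤ) → ℝ)
    (hsol : ∀ p ∈ latticeBall R, ∀ t : ℝ, 0 ≤ t →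
      HasDerivAt (fun s => f s p) (Qres R (f t) p) t) :
    ∀ t : ℝ, 0 ≤ t →
      ∑ p ∈ latticeBall R, enorm3 p * f t p = ∑ p ∈ latticeBall R, enorm3 p * f 0 p :=
  energy_conservation_lattice_general R f hsol
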